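/- Fix T > 0 and define W : [0,T] × ℝ → ℝ by W(t,x) = x for x > 0 and W(t,x) = x·e^{3(T−t)} for x ≤ 0. Then for every s ∈ [0,T), the set [0,∞) × [1, e^{3(T−s)}] × [0,∞) is contained in the second-order right parabolic superdifferential D^{1,2,+}_{t+,x} W(s,0); in particular (q,p,P) = (0,1,0) belongs to D^{1,2,+}_{t+,x} W(s,0) for every s ∈ [0,T). -/

import Mathlib

open Filter Topology Set

noncomputable section

/-- The second-order right parabolic superdifferential `D^{1,2,+}_{t+,x} w(t,x)`
for a function of one spatial variable. -/
noncomputable def superdiff1 (T : ℝ) (w : ℝ → ℝ → ℝ) (t x : ℝ) : Set (ℝ × ℝ × ℝ) :=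
  {qpP | Filter.limsup
      (fun sy : ℝ × ℝ =>
        (((w sy.1 sy.2 - w t x - qpP.1 * (sy.1 - t) - qpP.2.1 * (sy.2 - x)
            - (1 / 2) * qpP.2.2 * (sy.2 - x) ^ 2)
          / (|sy.1 - t| + |sy.2 - x| ^ 2) : ℝ) : EReal))
      (𝓝[(Set.Icc t T ×ˢ (Set.univ : Set ℝ)) \ {(t, x)}] (t, x)) ≤ 0}

/-- The second-order right parabolic subdifferential `D^{1,2,-}_{t+,x} w(t,x)`
for a function of one spatial variable. -/
noncomputable def subdiff1 (T : ℝ) (w : ℝ → ℝ → ℝ) (t x : ℝ) : Set (ℝ × ℝ × ℝ) :=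
  {qpP | (0 : EReal) ≤ Filter.liminf
      (fun sy : ℝ × ℝ =>
        (((w sy.1 sy.2 - w t x - qpP.1 * (sy.1 - t) - qpP.2.1 * (sy.2 - x)
            - (1 / 2) * qpP.2.2 * (sy.2 - x) ^ 2)
          / (|sy.1 - t| + |sy.2 - x| ^ 2) : ℝ) : EReal))
      (𝓝[(Set.Icc t T ×ˢ (Set.univ : Set ℝ)) \ {(t, x)}] (t, x))}

/-- The function `W(t,x) = x` for `x > 0` and `W(t,x) = x·e^{3(T-t)}` for `x ≤ 0`. -/
noncomputable def Wex (T t x : ℝ) : ℝ :=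
  if 0 < x then x else x * Real.exp (3 * (T - t))

lemma wex_exp_bound (T s t : ℝ) (hs0 : 0 ≤ s) (hts : s ≤ t) (htT : t ≤ T) :
    Real.exp (3 * (T - s)) - Real.exp (3 * (T - t)) ≤ 3 * Real.exp (3 * T) * (t - s) := by
  have h2 : Real.exp (3 * (T - t)) * Real.exp (3 * (t - s)) = Real.exp (3 * (T - s)) := by
    rw [← Real.exp_add]; ring_nf
  have h3 : Real.exp (3 * (t - s)) * Real.exp (-(3 * (t - s))) = 1 := by
    rw [← Real.exp_add]; simp
  have h4 : Real.exp (3 * (T - s)) ≤ Real.exp (3 * T) := by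
    apply Real.exp_le_exp.mpr; nlinarith
  have hb : Real.exp (3 * (t - s)) - 1 ≤ 3 * (t - s) * Real.exp (3 * (t - s)) := by
    nlinarith [mul_le_mul_of_nonneg_left (Real.add_one_le_exp (-(3 * (t - s))))
      (Real.exp_pos (3 * (t - s))).le, h3]
  nlinarith [mul_le_mul_of_nonneg_left hb (Real.exp_pos (3 * (T - t))).le, h2, h4,
    Real.exp_pos (3 * (T - t)), sub_nonneg.mpr hts]

lemma wex_key (T s q p P : ℝ) (hs0 : 0 ≤ s) (hq : 0 ≤ q) (hp1 : 1 ≤ p)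
    (hpE : p ≤ Real.exp (3 * (T - s))) (hP : 0 ≤ P) {t y : ℝ} (hts : s ≤ t) (htT : t ≤ T) :
    (Wex T t y - Wex T s 0 - q * (t - s) - p * (y - 0) - (1 / 2) * P * (y - 0) ^ 2)
      / (|t - s| + |y - 0| ^ 2) ≤ 3 * Real.exp (3 * T) * Real.sqrt (t - s) := by
  have hW0 : Wex T s 0 = 0 := by simp [Wex]
  have hd : (0:ℝ) ≤ t - s := sub_nonneg.mpr hts
  have habs : |t - s| = t - s := abs_of_nonneg hd
  have hy2 : |y - 0| ^ 2 = y ^ 2 := by rw [sub_zero, sq_abs]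
  have hK : (0:ℝ) < 3 * Real.exp (3 * T) := by positivity
  have hr : (0:ℝ) ≤ Real.sqrt (t - s) := Real.sqrt_nonneg _
  have hr2 : Real.sqrt (t - s) ^ 2 = t - s := Real.sq_sqrt hd
  rw [hW0, habs, hy2, sub_zero]
  rcases eq_or_lt_of_le (by positivity : (0:ℝ) ≤ (t - s) + y ^ 2) with hD | hD
  · rw [← hD, div_zero]; positivity
  · rw [div_le_iff₀ hD]
    by_cases hy : 0 < y
    · have hWt : Wex T t y = y := if_pos hy
      rw [hWt]
      have h1 : y - q * (t - s) - p * y - 1 / 2 * P * y ^ 2 ≤ 0 := by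
        nlinarith [mul_nonneg hq hd, mul_nonneg hP (sq_nonneg y)]
      have h2 : (0:ℝ) ≤ 3 * Real.exp (3 * T) * Real.sqrt (t - s) * ((t - s) + y ^ 2) := by
        positivity
      linarith
    · push_neg at hy
      have hWt : Wex T t y = y * Real.exp (3 * (T - t)) := if_neg (not_lt.mpr hy)
      rw [hWt]
      have hEt : Real.exp (3 * (T - t)) ≤ Real.exp (3 * (T - s)) := by
        apply Real.exp_le_exp.mpr; nlinarith
      have h1 : y * Real.exp (3 * (T - t)) - q * (t - s) - p * y - 1 / 2 * P * y ^ 2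
          ≤ (-y) * (Real.exp (3 * (T - s)) - Real.exp (3 * (T - t))) := by
        nlinarith [mul_nonneg (neg_nonneg.mpr hy) (sub_nonneg.mpr hpE),
          mul_nonneg hq hd, mul_nonneg hP (sq_nonneg y)]
      have h2 : (-y) * (Real.exp (3 * (T - s)) - Real.exp (3 * (T - t)))
          ≤ (-y) * (3 * Real.exp (3 * T) * (t - s)) :=
        mul_le_mul_of_nonneg_left (wex_exp_bound T s t hs0 hts htT) (neg_nonneg.mpr hy)
      have h3 : (-y) * (3 * Real.exp (3 * T) * (t - s))
          ≤ 3 * Real.exp (3 * T) * Real.sqrt (t - s) * ((t - s) + y ^ 2) := by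
        have key : (-y) * (t - s) ≤ Real.sqrt (t - s) * ((t - s) + y ^ 2) := by
          nlinarith [mul_nonneg hr (sq_nonneg (Real.sqrt (t - s) - (-y))),
            mul_nonneg (mul_nonneg (neg_nonneg.mpr hy) hr) hr, hr2]
        nlinarith [mul_le_mul_of_nonneg_left key hK.le]
      linarith

/-- The function `W(t,x) = x` for `x > 0` and `W(t,x) = x·e^{3(T-t)}` for `x ≤ 0` from
Example 2: at the point `(s,0)`, the set `[0,∞) × [1, e^{3(T-s)}] × [0,∞)` is contained
in the right parabolic superdifferential; in particular `(0,1,0)` lies in it. -/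
theorem stmt11 (T : ℝ) (hT : 0 < T) :
    (∀ s ∈ Set.Ico 0 T,
      Set.Ici (0 : ℝ) ×ˢ Set.Icc (1 : ℝ) (Real.exp (3 * (T - s))) ×ˢ Set.Ici (0 : ℝ)
        ⊆ superdiff1 T (Wex T) s 0) ∧
    (∀ s ∈ Set.Ico 0 T, ((0 : ℝ), (1 : ℝ), (0 : ℝ)) ∈ superdiff1 T (Wex T) s 0) := by
  have main : ∀ s ∈ Set.Ico 0 T,
      Set.Ici (0 : ℝ) ×ˢ Set.Icc (1 : ℝ) (Real.exp (3 * (T - s))) ×ˢ Set.Ici (0 : ℝ)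
        ⊆ superdiff1 T (Wex T) s 0 := by
    rintro s ⟨hs0, hsT⟩ ⟨q, p, P⟩ ⟨hq, ⟨hp1, hpE⟩, hP⟩
    simp only [Set.mem_Ici] at hq hP
    simp only [superdiff1, Set.mem_setOf_eq]
    set K : ℝ := 3 * Real.exp (3 * T) with hKdef
    have hK : (0:ℝ) < K := by positivity
    set F := 𝓝[(Set.Icc s T ×ˢ (Set.univ : Set ℝ)) \ {(s, (0:ℝ))}] ((s : ℝ), (0:ℝ)) with hF
    have H : ∀ ε : ℝ, 0 < ε → Filter.limsup
        (fun sy : ℝ × ℝ =>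
          (((Wex T sy.1 sy.2 - Wex T s 0 - q * (sy.1 - s) - p * (sy.2 - 0)
              - (1 / 2) * P * (sy.2 - 0) ^ 2)
            / (|sy.1 - s| + |sy.2 - 0| ^ 2) : ℝ) : EReal)) F ≤ (ε : EReal) := by
      intro ε hε
      apply Filter.limsup_le_of_le (by isBoundedDefault)
      have hmem : ∀ᶠ z : ℝ × ℝ in F, z ∈ (Set.Icc s T ×ˢ (Set.univ : Set ℝ)) \ {(s, (0:ℝ))} :=
        eventually_mem_nhdsWithin
      have hδpos : (0:ℝ) < (ε / K) ^ 2 := by positivity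
      have hdist : ∀ᶠ z : ℝ × ℝ in F, dist z (s, (0:ℝ)) < (ε / K) ^ 2 :=
        nhdsWithin_le_nhds (Metric.eventually_nhds_iff.mpr ⟨(ε / K) ^ 2, hδpos, fun _ h => h⟩)
      filter_upwards [hmem, hdist] with z hz hdz
      have hts : s ≤ z.1 := hz.1.1.1
      have htT : z.1 ≤ T := hz.1.1.2
      have hbd := wex_key T s q p P hs0 hq hp1 hpE hP hts htT (y := z.2)
      have h1 : z.1 - s < (ε / K) ^ 2 := by
        have hle : dist z.1 s ≤ dist z (s, (0:ℝ)) := by rw [Prod.dist_eq]; exact le_max_left _ _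
        have := hle.trans_lt hdz
        rw [Real.dist_eq] at this
        exact (le_abs_self _).trans_lt this
      have h2 : Real.sqrt (z.1 - s) ≤ ε / K := by
        rw [show ε / K = Real.sqrt ((ε / K) ^ 2) by
          rw [Real.sqrt_sq (by positivity)]]
        exact Real.sqrt_le_sqrt h1.le
      have h3 : K * Real.sqrt (z.1 - s) ≤ ε := by
        calc K * Real.sqrt (z.1 - s) ≤ K * (ε / K) := by
              exact mul_le_mul_of_nonneg_left h2 hK.le
          _ = ε := by field_simp
      exact EReal.coe_le_coe_iff.mpr (hbd.trans h3)
    refine le_of_forall_gt_imp_ge_of_dense ?_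
    intro a ha
    induction a using EReal.rec with
    | bot => exact absurd ha (by simp)
    | coe c =>
        have hc : (0:ℝ) < c := by exact_mod_cast ha
        exact H c hc
    | top => exact le_top
  refine ⟨main, fun s hs => main s hs ?_⟩
  simp only [Set.mem_prod, Set.mem_Ici, Set.mem_Icc]
  refine ⟨le_rfl, ⟨le_rfl, ?_⟩, le_rfl⟩
  apply Real.one_le_exp
  nlinarith [hs.1, hs.2]


end
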